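/- arXiv:0911.5543 — 6 statements merged into one kernel-verified Lean document; each statement's English description precedes it below -/
import Mathlib

section
/- Let k be a field and α, β ∈ k \ {0}, and let n, m be positive integers. Write d = gcd(n, m) = λn + μm with λ, μ ∈ ℤ. Then gcd(Y^n - α, Y^m - β) in k[Y] equals Y^d - α^λ β^μ if α^{m/d} = β^{n/d}, and equals 1 otherwise. -/
open Polynomial

/-!
Let `g` be the gcd and `c = α ^ λ * β ^ μ`. In `k[Y] ⧸ (g)` the class `x` of `Y` satisfies
`x ^ n = α` and `x ^ m = β`; as `α ≠ 0`, `x` is a unit, so `x ^ d = x ^ (λn + μm) = c`, i.e.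
`g ∣ Y ^ d - c`. Modulo `Y ^ d - c`, `Y ^ n - α` reduces to the constant `c ^ (n/d) - α`, and
similarly for `m`; hence `g` is a unit unless `c ^ (n/d) = α` and `c ^ (m/d) = β`, which force
`α ^ (m/d) = β ^ (n/d)`. Conversely, this relation together with `λ(n/d) + μ(m/d) = 1` gives
`c ^ (n/d) = α` and `c ^ (m/d) = β`, so `Y ^ d - c` divides both polynomials.
-/

theorem pow_eq_zpow_mul_zpow_of_bezout {G : Type*} [Group G] (u : G) {n m d : ℕ} {lam mu : ℤ}
    (hbez : lam * n + mu * m = d) : u ^ d = (u ^ n) ^ lam * (u ^ m) ^ mu := by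
  rw [← zpow_natCast, ← hbez, zpow_add, mul_comm lam, mul_comm mu, zpow_mul, zpow_mul,
    zpow_natCast, zpow_natCast]

theorem zpow_mul_zpow_pow_eq_of_pow_eq {G₀ : Type*} [CommGroupWithZero G₀] {a b : G₀}
    (ha : a ≠ 0) {n m : ℕ} {lam mu : ℤ} (hab : a ^ m = b ^ n) (hbez : lam * n + mu * m = 1) :
    (a ^ lam * b ^ mu) ^ n = a := by
  calc (a ^ lam * b ^ mu) ^ n = a ^ (lam * n) * ((b ^ n) ^ mu) := by
        rw [mul_pow, ← zpow_natCast, ← zpow_natCast, ← zpow_mul, ← zpow_mul, mul_comm mu,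
          zpow_mul b, zpow_natCast]
    _ = a ^ (lam * n + mu * m) := by
        rw [← hab, ← zpow_natCast, ← zpow_mul, zpow_add₀ ha, mul_comm (m : ℤ)]
    _ = a := by rw [hbez, zpow_one]

theorem bezout_div_gcd_eq_one {n m : ℕ} (h : 0 < Nat.gcd n m) {lam mu : ℤ}
    (hbez : lam * n + mu * m = Nat.gcd n m) :
    lam * ↑(n / Nat.gcd n m) + mu * ↑(m / Nat.gcd n m) = 1 := by
  have hn : (n : ℤ) = Nat.gcd n m * ↑(n / Nat.gcd n m) := by
    exact_mod_cast (Nat.mul_div_cancel' (Nat.gcd_dvd_left n m)).symm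
  have hm : (m : ℤ) = Nat.gcd n m * ↑(m / Nat.gcd n m) := by
    exact_mod_cast (Nat.mul_div_cancel' (Nat.gcd_dvd_right n m)).symm
  have hd : (Nat.gcd n m : ℤ) ≠ 0 := by exact_mod_cast h.ne'
  exact mul_left_cancel₀ hd (by linear_combination hbez - lam * hn - mu * hm)

theorem dvd_X_pow_sub_C_of_bezout {k : Type*} [Field k] {f : k[X]} {α β : k}
    (hα : α ≠ 0) (hβ : β ≠ 0) {n m d : ℕ} (hn : n ≠ 0) {lam mu : ℤ}
    (hbez : lam * n + mu * m = d) (hfα : f ∣ X ^ n - C α) (hfβ : f ∣ X ^ m - C β) :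
    f ∣ X ^ d - C (α ^ lam * β ^ mu) := by
  have root_pow {N : ℕ} {γ : k} (h : f ∣ X ^ N - C γ) :
      AdjoinRoot.root f ^ N = AdjoinRoot.of f γ := by
    rwa [← AdjoinRoot.mk_eq_zero, map_sub, map_pow, AdjoinRoot.mk_X, AdjoinRoot.mk_C,
      sub_eq_zero] at h
  have hunit : IsUnit (AdjoinRoot.root f) :=
    (isUnit_pow_iff hn).mp (root_pow hfα ▸ (Ne.isUnit hα).map (AdjoinRoot.of f))
  set ψ : kˣ →* (AdjoinRoot f)ˣ := Units.map (AdjoinRoot.of f).toMonoidHom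
  have hn' : hunit.unit ^ n = ψ (Units.mk0 α hα) := Units.ext (by simpa [ψ] using root_pow hfα)
  have hm' : hunit.unit ^ m = ψ (Units.mk0 β hβ) := Units.ext (by simpa [ψ] using root_pow hfβ)
  have hd := congrArg Units.val (pow_eq_zpow_mul_zpow_of_bezout hunit.unit hbez)
  rw [hn', hm', ← map_zpow, ← map_zpow, ← map_mul, Units.coe_map, Units.val_pow_eq_pow_val,
    IsUnit.unit_spec] at hd
  rw [← AdjoinRoot.mk_eq_zero, map_sub, map_pow, AdjoinRoot.mk_X, AdjoinRoot.mk_C, sub_eq_zero,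
    hd]
  simp [Units.val_zpow_eq_zpow_val]

theorem X_pow_sub_C_dvd_X_pow_sub_C_pow {R : Type*} [CommRing R] (c : R) {d N : ℕ} (h : d ∣ N) :
    X ^ d - C c ∣ X ^ N - C (c ^ (N / d)) := by
  obtain ⟨j, rfl⟩ := h
  rcases Nat.eq_zero_or_pos d with rfl | hd
  · simp
  rw [Nat.mul_div_cancel_left j hd, pow_mul, C_pow]
  exact sub_dvd_pow_sub_pow _ _ _

theorem pow_div_eq_of_dvd_X_pow_sub_C {k : Type*} [Field k] {g : k[X]} (hg : ¬IsUnit g)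
    {a c : k} {d N : ℕ} (h : d ∣ N) (hc : g ∣ X ^ d - C c) (ha : g ∣ X ^ N - C a) :
    c ^ (N / d) = a := by
  by_contra hne
  have hC : g ∣ C (c ^ (N / d) - a) := by
    have := dvd_sub ha (hc.trans (X_pow_sub_C_dvd_X_pow_sub_C_pow c h))
    rwa [sub_sub_sub_cancel_left, ← C_sub] at this
  exact hg (isUnit_of_dvd_unit hC (isUnit_C.mpr (sub_ne_zero.mpr hne).isUnit))

theorem stmt1_general (k : Type) [Field k] [DecidableEq k] (α β : k) (hα : α ≠ 0) (hβ : β ≠ 0)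
    (n m : ℕ) (hn : 0 < n) (lam mu : ℤ)
    (hbez : lam * (n : ℤ) + mu * (m : ℤ) = (Nat.gcd n m : ℤ)) :
    gcd ((X : k[X]) ^ n - C α) ((X : k[X]) ^ m - C β) =
      if α ^ (m / Nat.gcd n m) = β ^ (n / Nat.gcd n m)
      then (X : k[X]) ^ (Nat.gcd n m) - C (α ^ lam * β ^ mu)
      else 1 := by
  set c := α ^ lam * β ^ mu
  have hd : 0 < Nat.gcd n m := Nat.gcd_pos_of_pos_left m hn
  have hbez' := bezout_div_gcd_eq_one hd hbez
  have hkey : _ ∣ X ^ Nat.gcd n m - C c :=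
    dvd_X_pow_sub_C_of_bezout hα hβ hn.ne' hbez (gcd_dvd_left _ _) (gcd_dvd_right _ _)
  split_ifs with hcond
  · have hcn := zpow_mul_zpow_pow_eq_of_pow_eq hα hcond hbez'
    have hcm : c ^ (m / Nat.gcd n m) = β := by
      rw [show c = β ^ mu * α ^ lam from mul_comm _ _]
      exact zpow_mul_zpow_pow_eq_of_pow_eq hβ hcond.symm (by linarith)
    have hdvd := dvd_gcd
      (hcn ▸ X_pow_sub_C_dvd_X_pow_sub_C_pow c (Nat.gcd_dvd_left n m))
      (hcm ▸ X_pow_sub_C_dvd_X_pow_sub_C_pow c (Nat.gcd_dvd_right n m))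
    rw [gcd_eq_normalize hkey hdvd, (monic_X_pow_sub_C _ hd.ne').normalize_eq_self]
  · have hunit : IsUnit (gcd ((X : k[X]) ^ n - C α) ((X : k[X]) ^ m - C β)) := by
      by_contra hg
      have hcn := pow_div_eq_of_dvd_X_pow_sub_C hg (Nat.gcd_dvd_left n m) hkey (gcd_dvd_left _ _)
      have hcm := pow_div_eq_of_dvd_X_pow_sub_C hg (Nat.gcd_dvd_right n m) hkey (gcd_dvd_right _ _)
      rw [← hcn, ← hcm, ← pow_mul, ← pow_mul, mul_comm (n / _)] at hcond
      exact hcond rfl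
    rw [← normalize_gcd, normalize_eq_one.mpr hunit]

/-- Gcd of two radical polynomials over a field: with `d = gcd(n,m) = λn + μm`,
`gcd(Y^n - α, Y^m - β)` is `Y^d - α^λ β^μ` if `α^{m/d} = β^{n/d}` and `1` otherwise. -/
theorem stmt1 (k : Type) [Field k] [DecidableEq k] (α β : k) (hα : α ≠ 0) (hβ : β ≠ 0)
    (n m : ℕ) (hn : 0 < n) (hm : 0 < m) (lam mu : ℤ)
    (hbez : lam * (n : ℤ) + mu * (m : ℤ) = (Nat.gcd n m : ℤ)) :
    gcd ((X : k[X]) ^ n - C α) ((X : k[X]) ^ m - C β) =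
      if α ^ (m / Nat.gcd n m) = β ^ (n / Nat.gcd n m)
      then (X : k[X]) ^ (Nat.gcd n m) - C (α ^ lam * β ^ mu)
      else 1 :=
  stmt1_general k α β hα hβ n m hn lam mu hbez
end

section
/- Let k be a field, α, β ∈ k \ {0}, and n, m positive integers with n ≥ m. Write n = qm + r with 0 ≤ r < m. Then the remainder of Y^n - α upon division by Y^m - β equals β^q·(Y^r - α·β^{-q}). -/
/-! Modulo `X^m - b` we have `X^m ≡ b`, so `X^n = (X^m)^q X^r ≡ b^q X^r`, which already has
degree `r < m`; constants are their own remainders. -/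

open Polynomial

namespace Polynomial

variable {R : Type*} [CommRing R] {m : ℕ}

theorem X_pow_modByMonic_X_pow_sub_C (hm : 0 < m) (b : R) (n : ℕ) :
    (X ^ n : R[X]) %ₘ (X ^ m - C b) = C (b ^ (n / m)) * X ^ (n % m) := by
  nontriviality R
  have hmonic : (X ^ m - C b : R[X]).Monic := monic_X_pow_sub_C b hm.ne'
  have hdvd : (X ^ m - C b : R[X]) ∣ X ^ n - C (b ^ (n / m)) * X ^ (n % m) := by
    have hsplit : (X ^ n - C (b ^ (n / m)) * X ^ (n % m) : R[X]) =
        ((X ^ m) ^ (n / m) - C b ^ (n / m)) * X ^ (n % m) := by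
      rw [sub_mul, ← pow_mul, ← pow_add, Nat.div_add_mod, C_pow]
    rw [hsplit]
    exact (sub_dvd_pow_sub_pow _ _ _).mul_right _
  rw [modByMonic_eq_of_dvd_sub hmonic hdvd, modByMonic_eq_self_iff hmonic,
    degree_X_pow_sub_C hm]
  exact degree_C_mul_X_pow_le _ _ |>.trans_lt (by exact_mod_cast Nat.mod_lt n hm)

theorem C_modByMonic_X_pow_sub_C (hm : 0 < m) (a b : R) :
    C a %ₘ (X ^ m - C b) = C a := by
  nontriviality R
  rw [modByMonic_eq_self_iff (monic_X_pow_sub_C b hm.ne'), degree_X_pow_sub_C hm]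
  exact degree_C_le.trans_lt (by exact_mod_cast hm)

theorem X_pow_sub_C_modByMonic_X_pow_sub_C (hm : 0 < m) (a b : R) (n : ℕ) :
    (X ^ n - C a : R[X]) %ₘ (X ^ m - C b) = C (b ^ (n / m)) * X ^ (n % m) - C a := by
  rw [sub_modByMonic, X_pow_modByMonic_X_pow_sub_C hm, C_modByMonic_X_pow_sub_C hm]

end Polynomial

theorem stmt2_general (k : Type) [Field k] (α β : k) (hβ : β ≠ 0)
    (n m : ℕ) (hm : 0 < m) :
    ((X : k[X]) ^ n - C α) %ₘ ((X : k[X]) ^ m - C β) =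
      C (β ^ (n / m)) * ((X : k[X]) ^ (n % m) - C (α * (β ^ (n / m))⁻¹)) := by
  rw [X_pow_sub_C_modByMonic_X_pow_sub_C hm, mul_sub, ← C_mul, ← div_eq_mul_inv,
    mul_div_cancel₀ _ (pow_ne_zero _ hβ)]

/-- Long division of radical polynomials: if `n = q·m + r` with `0 ≤ r < m`, then
`(Y^n - α) mod (Y^m - β) = β^q·(Y^r - α·β^{-q})`. -/
theorem stmt2 (k : Type) [Field k] (α β : k) (hα : α ≠ 0) (hβ : β ≠ 0)
    (n m : ℕ) (hm : 0 < m) (hmn : m ≤ n) :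
    ((X : k[X]) ^ n - C α) %ₘ ((X : k[X]) ^ m - C β) =
      C (β ^ (n / m)) * ((X : k[X]) ^ (n % m) - C (α * (β ^ (n / m))⁻¹)) :=
  stmt2_general k α β hβ n m hm
end

section
/- Let q be a prime power, n a positive integer coprime to q, and α ∈ 𝔽_q^*. Let e = ord(α) be the multiplicative order of α in 𝔽_q^*. Then for any positive integer m, the polynomial Y^n - α splits completely over 𝔽_{q^m} if and only if n·e divides q^m - 1. Consequently, the degree of the splitting field of Y^n - α over 𝔽_q equals the multiplicative order of q in (ℤ/(n·e)ℤ)^*. -/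
/-!
Write `N = |𝔽| - 1` for the order of the cyclic group `𝔽ˣ`. Over a finite field `𝔽` in which `n`
is invertible, `Y^n - α` splits iff `𝔽` contains a primitive `n`-th root of unity and an `n`-th
root of `α`, that is iff `n ∣ N` and `α` is an `n`-th power in `𝔽ˣ`; in a cyclic group of order `N`
this is equivalent to `n · ord(α) ∣ N`.

For the degree `d` of the splitting field `K` of `Y^n - α` over `𝔽_q`, let `r` be the order of `q`
modulo `n·e`. Every root of `Y^n - α` has order dividing `n·e ∣ q^r - 1`, so the `r`-th power of
the Frobenius fixes the roots, hence all of `K`, and `d ∣ r`. Conversely `Y^n - α` splits in `K`,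
which has `q^d` elements, so `n·e ∣ q^d - 1` and `r ∣ d`.
-/

open Polynomial

theorem IsCyclic.mul_orderOf_dvd_natCard_iff {G : Type*} [Group G] [IsCyclic G]
    [Finite G] {n : ℕ} {a : G} :
    n * orderOf a ∣ Nat.card G ↔ n ∣ Nat.card G ∧ ∃ b : G, b ^ n = a := by
  constructor
  · intro h
    refine ⟨dvd_of_mul_right_dvd h, ?_⟩
    obtain ⟨g, hg⟩ := IsCyclic.exists_generator (α := G)
    obtain ⟨k, rfl⟩ := mem_powers_iff_mem_zpowers.mpr (hg a)
    rw [orderOf_pow, orderOf_eq_card_of_forall_mem_zpowers hg] at h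
    set N := Nat.card G
    have hgN : N.gcd k ∣ N := Nat.gcd_dvd_left N k
    have hquot : 0 < N / N.gcd k :=
      Nat.div_pos (Nat.le_of_dvd Nat.card_pos hgN) (Nat.gcd_pos_of_pos_left k Nat.card_pos)
    have hn : n ∣ N.gcd k :=
      Nat.dvd_of_mul_dvd_mul_right hquot (by rwa [Nat.mul_div_cancel' hgN])
    obtain ⟨j, hj⟩ := hn.trans (Nat.gcd_dvd_right N k)
    exact ⟨g ^ j, by rw [← pow_mul, mul_comm, hj]⟩
  · rintro ⟨hn, b, rfl⟩
    rw [orderOf_pow, ← Nat.mul_div_assoc _ (Nat.gcd_dvd_left _ _), Nat.gcd_comm]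
    exact Nat.lcm_dvd hn (orderOf_dvd_natCard b)

theorem exists_isPrimitiveRoot_of_splits_X_pow_sub_one {F : Type*} [Field F] {n : ℕ}
    (hn : (n : F) ≠ 0) (h : Splits (X ^ n - 1 : F[X])) : ∃ ζ : F, IsPrimitiveRoot ζ n := by
  classical
  have : NeZero n := ⟨by rintro rfl; exact hn Nat.cast_zero⟩
  have hnodup : (nthRoots n (1 : F)).Nodup :=
    nodup_roots (separable_X_pow_sub_C 1 hn one_ne_zero)
  rw [← C_1] at h
  rw [← card_rootsOfUnity_eq_iff_exists_isPrimitiveRoot,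
    Nat.card_congr (rootsOfUnityEquivNthRoots F n)]
  simp_rw [← Multiset.mem_toFinset]
  rw [Nat.card_eq_finsetCard, Multiset.toFinset_card_of_nodup hnodup, nthRoots,
    splits_iff_card_roots.mp h, natDegree_X_pow_sub_C]

theorem splits_X_pow_sub_C_iff {F : Type*} [Field F] {n : ℕ} (hn : (n : F) ≠ 0) {a : F}
    (ha : a ≠ 0) :
    Splits (X ^ n - C a) ↔ (∃ ζ : F, IsPrimitiveRoot ζ n) ∧ ∃ b : F, b ^ n = a := by
  refine ⟨fun h ↦ ⟨?_, ?_⟩,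
    fun ⟨⟨ζ, hζ⟩, b, hb⟩ ↦ X_pow_sub_C_splits_of_isPrimitiveRoot hζ hb⟩
  · refine exists_isPrimitiveRoot_of_splits_X_pow_sub_one hn ?_
    simpa using splits_X_pow_sub_one_of_X_pow_sub_C (RingHom.id F) n ha (by simpa using h)
  · have hpos : 0 < n := Nat.pos_of_ne_zero (by rintro rfl; exact hn Nat.cast_zero)
    obtain ⟨b, hb⟩ :=
      h.exists_eval_eq_zero (by rw [degree_X_pow_sub_C hpos]; exact_mod_cast hpos.ne')
    exact ⟨b, by simpa [sub_eq_zero] using hb⟩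

theorem ZMod.natCast_eq_one_iff_dvd_sub_one {k a : ℕ} (ha : 1 ≤ a) :
    (a : ZMod k) = 1 ↔ k ∣ a - 1 := by
  rw [← ZMod.natCast_eq_zero_iff, Nat.cast_sub ha, Nat.cast_one, sub_eq_zero]

namespace FiniteField

variable {F : Type*} [Field F] [Fintype F]

theorem exists_isPrimitiveRoot_iff_dvd_card_sub_one {n : ℕ} (hn : n ≠ 0) :
    (∃ ζ : F, IsPrimitiveRoot ζ n) ↔ n ∣ Fintype.card F - 1 := by
  classical
  rw [← Fintype.card_units]
  constructor
  · rintro ⟨ζ, hζ⟩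
    obtain ⟨u, rfl⟩ := hζ.isUnit hn
    rw [hζ.eq_orderOf, orderOf_units]
    exact orderOf_dvd_card
  · intro h
    obtain ⟨g, hg⟩ := IsCyclic.exists_ofOrder_eq_natCard (α := Fˣ)
    rw [← Nat.card_eq_fintype_card, ← hg] at h
    have hζ := IsPrimitiveRoot.orderOf (g ^ (orderOf g / n))
    rw [orderOf_pow_orderOf_div (orderOf_pos g).ne' h] at hζ
    exact ⟨_, IsPrimitiveRoot.coe_units_iff.mpr hζ⟩

theorem splits_X_pow_sub_C_iff {n : ℕ} (hn : (n : F) ≠ 0) {a : F} (ha : a ≠ 0) :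
    Splits (X ^ n - C a) ↔ n * orderOf a ∣ Fintype.card F - 1 := by
  classical
  have hn' : n ≠ 0 := by rintro rfl; exact hn Nat.cast_zero
  rw [_root_.splits_X_pow_sub_C_iff hn ha, exists_isPrimitiveRoot_iff_dvd_card_sub_one hn',
    ← Units.val_mk0 ha, orderOf_units, ← Fintype.card_units, ← Nat.card_eq_fintype_card,
    IsCyclic.mul_orderOf_dvd_natCard_iff]
  refine and_congr_right fun _ ↦
    ⟨fun ⟨b, hb⟩ ↦ ⟨Units.mk0 b ?_, ?_⟩, fun ⟨u, hu⟩ ↦ ⟨u, ?_⟩⟩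
  · rintro rfl
    exact ha (by simpa [zero_pow hn', eq_comm] using hb)
  · ext; simp [hb]
  · simp [← Units.val_pow_eq_pow_val, hu]

theorem natCast_ne_zero_of_coprime_card {n : ℕ} (h : n.Coprime (Fintype.card F)) :
    (n : F) ≠ 0 := by
  -- Bézout `u n + v |F| = 1`, read in `F` where `|F| = 0`.
  have := (Nat.isCoprime_iff_coprime.mpr h).map (Int.castRingHom F)
  simp only [eq_intCast, Int.cast_natCast, cast_card_eq_zero, isCoprime_zero_right] at this
  exact this.ne_zero

theorem splits_map_X_pow_sub_C_iff {K : Type*} [Field K] [Algebra K F] {n : ℕ}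
    (hn : (n : K) ≠ 0) {a : K} (ha : a ≠ 0) :
    Splits ((X ^ n - C a).map (algebraMap K F)) ↔ n * orderOf a ∣ Fintype.card F - 1 := by
  have hinj := (algebraMap K F).injective
  rw [Polynomial.map_sub, Polynomial.map_pow, map_X, map_C,
    splits_X_pow_sub_C_iff (by rwa [← map_natCast (algebraMap K F), ne_eq, map_eq_zero_iff _ hinj])
      ((map_ne_zero_iff _ hinj).mpr ha),
    show orderOf (algebraMap K F a) = orderOf a from
      orderOf_injective (algebraMap K F : K →* F) hinj a]

theorem finrank_splittingField_dvd (f : F[X]) {r : ℕ}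
    (h : ∀ x ∈ f.rootSet f.SplittingField, x ^ Fintype.card F ^ r = x) :
    Module.finrank F f.SplittingField ∣ r := by
  rw [← orderOf_frobeniusAlgHom]
  refine orderOf_dvd_of_pow_eq_one
    (AlgHom.ext_of_adjoin_eq_top (SplittingField.adjoin_rootSet f) fun x hx ↦ ?_)
  simp [AlgHom.coe_pow, coe_frobeniusAlgHom, pow_iterate, h x hx]

theorem finrank_splittingField_X_pow_sub_C {n : ℕ} (hn : (n : F) ≠ 0) {a : F} (ha : a ≠ 0) :
    Module.finrank F (X ^ n - C a).SplittingField =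
      orderOf (Fintype.card F : ZMod (n * orderOf a)) := by
  have pow_eq_one_iff (s : ℕ) : (Fintype.card F : ZMod (n * orderOf a)) ^ s = 1 ↔
      n * orderOf a ∣ Fintype.card F ^ s - 1 := by
    rw [← Nat.cast_pow, ZMod.natCast_eq_one_iff_dvd_sub_one (Nat.one_le_pow _ _ Fintype.card_pos)]
  refine Nat.dvd_antisymm (finrank_splittingField_dvd _ fun x hx ↦ ?_) ?_
  · have hxn : x ^ n = algebraMap F _ a := by simpa [sub_eq_zero] using (mem_rootSet.mp hx).2
    have hx : orderOf x ∣ Fintype.card F ^ orderOf (Fintype.card F : ZMod (n * orderOf a)) - 1 :=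
      (orderOf_dvd_of_pow_eq_one (by rw [pow_mul, hxn, ← map_pow, pow_orderOf_eq_one, map_one]))
        |>.trans ((pow_eq_one_iff _).mp (pow_orderOf_eq_one _))
    rw [← pow_sub_one_mul (by positivity) x, orderOf_dvd_iff_pow_eq_one.mp hx, one_mul]
  · let := Fintype.ofFinite (X ^ n - C a).SplittingField
    refine orderOf_dvd_of_pow_eq_one ((pow_eq_one_iff _).mpr ?_)
    rw [← Module.card_eq_pow_finrank]
    exact (splits_map_X_pow_sub_C_iff hn ha).mp (SplittingField.splits _)

end FiniteField

theorem stmt4_general (q n : ℕ) (hcop : Nat.Coprime n q)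
    (F0 : Type) [Field F0] [Fintype F0] (hF0 : Fintype.card F0 = q)
    (α : F0) (hα : α ≠ 0) (e : ℕ) (he : e = orderOf α) :
    (∀ (m : ℕ), 0 < m → ∀ (F : Type) [Field F] [Algebra F0 F] [Fintype F],
        Fintype.card F = q ^ m →
        (Polynomial.Splits (((X : F0[X]) ^ n - C α).map (algebraMap F0 F)) ↔
          n * e ∣ q ^ m - 1)) ∧
    Module.finrank F0 ((X : F0[X]) ^ n - C α).SplittingField
      = orderOf (q : ZMod (n * e)) := by
  subst hF0 he
  have hn : (n : F0) ≠ 0 := FiniteField.natCast_ne_zero_of_coprime_card hcop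
  refine ⟨fun m _ F _ _ _ hF ↦ ?_, FiniteField.finrank_splittingField_X_pow_sub_C hn hα⟩
  rw [FiniteField.splits_map_X_pow_sub_C_iff hn hα, hF]

/-- Splitting of `Y^n - α` over finite fields: with `e = ord(α)`, the polynomial `Y^n - α`
splits completely over `𝔽_{q^m}` iff `n·e ∣ q^m - 1`; consequently the degree of its
splitting field over `𝔽_q` is the multiplicative order of `q` modulo `n·e`. -/
theorem stmt4 (p q n : ℕ) (hp : p.Prime) (hq : ∃ e : ℕ, 0 < e ∧ q = p ^ e) (hn : 0 < n)
    (hcop : Nat.Coprime n q)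
    (F0 : Type) [Field F0] [Fintype F0] (hF0 : Fintype.card F0 = q)
    (α : F0) (hα : α ≠ 0) (e : ℕ) (he : e = orderOf α) :
    (∀ (m : ℕ), 0 < m → ∀ (F : Type) [Field F] [Algebra F0 F] [Fintype F],
        Fintype.card F = q ^ m →
        (Polynomial.Splits (((X : F0[X]) ^ n - C α).map (algebraMap F0 F)) ↔
          n * e ∣ q ^ m - 1)) ∧
    Module.finrank F0 ((X : F0[X]) ^ n - C α).SplittingField
      = orderOf (q : ZMod (n * e)) :=
  stmt4_general q n hcop F0 hF0 α hα e he
end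

section
/- Let n ≥ 2, let (e_j)_{j ∈ ℤ} be a family of nonnegative integers, almost all zero, and fix i ∈ {1, …, n-1}. With deg D = ∑_j j·e_j and deg D_i = ∑_j ⌊i·j/n⌋·e_j, equality deg D_i = ⌈i·(deg D)/n⌉ holds if and only if for every j ∈ ℤ, either e_j = 0 or n divides i·j. -/
/-!
Each summand satisfies `⌊i j / n⌋ e_j ≤ (i j / n) e_j`, so `deg D_i ≤ i deg D / n ≤ ⌈i deg D / n⌉`.
Since `deg D_i` is an integer, it equals the ceiling exactly when it equals `i deg D / n`, i.e. when
every summand with `e_j ≠ 0` has no rounding loss, i.e. `n ∣ i j`.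
-/

open Finset

lemma Int.eq_ceil_iff_of_le {α : Type*} [Field α] [LinearOrder α] [IsStrictOrderedRing α]
    [FloorRing α] {z : ℤ} {a : α} (hz : (z : α) ≤ a) : z = ⌈a⌉ ↔ (z : α) = a := by
  constructor
  · rintro rfl
    exact le_antisymm hz (Int.le_ceil a)
  · intro h
    rw [← h, Int.ceil_intCast]

lemma Int.cast_div_natCast_mem_range_iff {α : Type*} [Field α] [CharZero α] (m : ℤ) {n : ℕ}
    (hn : n ≠ 0) : (m : α) / n ∈ Set.range (Int.cast : ℤ → α) ↔ (n : ℤ) ∣ m := by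
  have hn' : (n : α) ≠ 0 := Nat.cast_ne_zero.mpr hn
  constructor
  · rintro ⟨k, hk⟩
    refine ⟨k, Int.cast_injective (α := α) ?_⟩
    rw [eq_div_iff hn'] at hk
    push_cast
    rw [← hk, mul_comm]
  · rintro ⟨k, rfl⟩
    exact ⟨k, by push_cast; field_simp⟩

lemma sum_floor_mul_eq_ceil_sum_mul_iff {ι α : Type*} [Field α] [LinearOrder α]
    [IsStrictOrderedRing α] [FloorRing α] (s : Finset ι) (x : ι → α) (w : ι → ℕ)
    (hw : ∀ j ∈ s, w j ≠ 0) :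
    ∑ j ∈ s, ⌊x j⌋ * (w j : ℤ) = ⌈∑ j ∈ s, x j * w j⌉ ↔ ∀ j ∈ s, (⌊x j⌋ : α) = x j := by
  have hterm : ∀ j ∈ s, (⌊x j⌋ : α) * w j ≤ x j * w j := fun j _ =>
    mul_le_mul_of_nonneg_right (Int.floor_le _) (Nat.cast_nonneg _)
  rw [Int.eq_ceil_iff_of_le (by push_cast; exact sum_le_sum hterm)]
  push_cast
  rw [sum_eq_sum_iff_of_le hterm]
  refine forall₂_congr fun j hj => mul_left_inj' ?_
  exact Nat.cast_ne_zero.mpr (hw j hj)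

theorem stmt12_general (n : ℕ) (hn : 2 ≤ n) (e : ℤ →₀ ℕ) (i : ℕ)
    (degD degDi : ℤ)
    (hdegD : degD = ∑ j ∈ e.support, j * (e j : ℤ))
    (hdegDi : degDi = ∑ j ∈ e.support, ⌊((i : ℚ) * (j : ℚ)) / (n : ℚ)⌋ * (e j : ℤ)) :
    degDi = ⌈((i : ℚ) * (degD : ℚ)) / (n : ℚ)⌉ ↔
      ∀ j : ℤ, e j = 0 ∨ (n : ℤ) ∣ (i : ℤ) * j := by
  have hn0 : n ≠ 0 := by omega
  have hscaled : (i : ℚ) * degD / n = ∑ j ∈ e.support, (i : ℚ) * j / n * (e j : ℚ) := by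
    rw [hdegD, Int.cast_sum, mul_sum, sum_div]
    exact sum_congr rfl fun j _ => by push_cast; ring
  rw [hdegDi, hscaled,
    sum_floor_mul_eq_ceil_sum_mul_iff _ _ _ fun j hj => Finsupp.mem_support_iff.mp hj]
  have hexact (j : ℤ) : (⌊(i : ℚ) * j / n⌋ : ℚ) = (i : ℚ) * j / n ↔ (n : ℤ) ∣ i * j := by
    rw [Int.floor_eq_self_iff_mem, ← Int.cast_natCast i, ← Int.cast_mul,
      Int.cast_div_natCast_mem_range_iff _ hn0]
  simp only [hexact, Finsupp.mem_support_iff, ne_eq, or_iff_not_imp_left]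

/-- With `deg D = ∑_j j·e_j` and `deg D_i = ∑_j ⌊i·j/n⌋·e_j` (almost all `e_j` zero), for
`1 ≤ i < n`: `deg D_i = ⌈i·deg D/n⌉` iff for every `j`, either `e_j = 0` or `n ∣ i·j`. -/
theorem stmt12 (n : ℕ) (hn : 2 ≤ n) (e : ℤ →₀ ℕ) (i : ℕ) (hi1 : 1 ≤ i) (hin : i < n)
    (degD degDi : ℤ)
    (hdegD : degD = ∑ j ∈ e.support, j * (e j : ℤ))
    (hdegDi : degDi = ∑ j ∈ e.support, ⌊((i : ℚ) * (j : ℚ)) / (n : ℚ)⌋ * (e j : ℤ)) :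
    degDi = ⌈((i : ℚ) * (degD : ℚ)) / (n : ℚ)⌉ ↔
      ∀ j : ℤ, e j = 0 ∨ (n : ℤ) ∣ (i : ℤ) * j :=
  stmt12_general n hn e i degD degDi hdegD hdegDi
end

section
/- Let K = k(x, y) with y^n = D, n coprime to char k, Y^n - D irreducible over k(x). Let 𝔭 be a place of k(x) with uniformizer π. Then (π^{-⌊i·v_𝔭(D)/n⌋}·y^i)_{i=0,…,n-1} is an o_𝔭-basis of the integral closure O'_𝔭 of the valuation ring o_𝔭 in K. -/
/-!
The family is a rescaling of the power basis `(yⁱ)`, so it is linearly independent. An element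
`x = Σ cᵢ yⁱ` is integral over `o_𝔭` iff every summand is: if `x` is integral, so are its
conjugates `σⱼ x` under `y ↦ ζʲ y` (`ζ` a primitive `n`-th root of unity in an algebraic
closure), and discrete Fourier inversion `n cᵢ yⁱ = Σⱼ ζ^{-ij} σⱼ x` isolates the summands.
A summand `c yⁱ` is integral iff its `n`-th power `cⁿ Dⁱ ∈ k(x)` lies in the integrally closed
ring `o_𝔭`, i.e. iff `n v(c) + i v(D) ≥ 0`, i.e. iff `v(c) ≥ -⌊i v(D)/n⌋`.
-/

open Polynomial

theorem isIntegral_of_pow_eq_algebraMap {F K : Type*} [Field F] [CommRing K] [Algebra F K]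
    {O : Subring F} {z : K} {m : ℕ} (hm : 0 < m) {s : F} (hs : s ∈ O)
    (h : z ^ m = algebraMap F K s) : IsIntegral O z :=
  .of_pow hm (h ▸ isIntegral_algebraMap (x := (⟨s, hs⟩ : O)))

theorem Subring.isIntegral_iff_exists_monic {F A : Type*} [Field F] [CommRing A] [Algebra F A]
    {O : Subring F} {x : A} :
    IsIntegral O x ↔
      ∃ p : F[X], p.Monic ∧ (∀ m : ℕ, p.coeff m ∈ O) ∧ aeval x p = 0 := by
  constructor
  · rintro ⟨p, hmon, hp⟩
    exact ⟨p.map (algebraMap O F), hmon.map _, fun m => by rw [coeff_map]; exact (p.coeff m).2,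
      by rwa [aeval_map_algebraMap]⟩
  · rintro ⟨p, hmon, hcoeff, hp⟩
    have hsub : ↑p.coeffs ⊆ (O : Set F) := fun c hc => by
      obtain ⟨m, _, rfl⟩ := mem_coeffs_iff.mp hc
      exact hcoeff m
    refine ⟨p.toSubring O hsub, (monic_toSubring _ _ _).mpr hmon, ?_⟩
    change aeval x _ = 0
    rw [← aeval_map_algebraMap F x, show algebraMap O F = O.subtype from rfl, map_toSubring]
    exact hp

section Valuation

variable {F : Type*} [Field F] {ν : F → ℤ}
  (hmul : ∀ a b : F, a ≠ 0 → b ≠ 0 → ν (a * b) = ν a + ν b)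
include hmul

theorem val_one : ν 1 = 0 := by
  have h := hmul 1 1 one_ne_zero one_ne_zero
  rw [mul_one] at h
  omega

theorem val_pow {a : F} (ha : a ≠ 0) (m : ℕ) : ν (a ^ m) = m * ν a := by
  induction m with
  | zero => simp [val_one hmul]
  | succ m ih =>
    rw [pow_succ, hmul _ _ (pow_ne_zero _ ha) ha, ih]
    push_cast
    ring

theorem val_inv {a : F} (ha : a ≠ 0) : ν a⁻¹ = -ν a := by
  have h := hmul a a⁻¹ ha (inv_ne_zero ha)
  rw [mul_inv_cancel₀ ha, val_one hmul] at h
  omega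

theorem val_zpow {a : F} (ha : a ≠ 0) (m : ℤ) : ν (a ^ m) = m * ν a := by
  obtain ⟨m, rfl | rfl⟩ := m.eq_nat_or_neg
  · rw [zpow_natCast, val_pow hmul ha]
  · rw [zpow_neg, zpow_natCast, val_inv hmul (pow_ne_zero _ ha), val_pow hmul ha, neg_mul]

variable {O : Subring F} (hO : ∀ x : F, x ∈ O ↔ x = 0 ∨ 0 ≤ ν x)
include hO

theorem mem_or_inv_mem_of_val (x : F) : x ∈ O ∨ x⁻¹ ∈ O := by
  rcases eq_or_ne x 0 with rfl | hx
  · exact .inl O.zero_mem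
  rcases le_total 0 (ν x) with h | h
  · exact .inl ((hO x).mpr (.inr h))
  · exact .inr ((hO _).mpr (.inr (by rw [val_inv hmul hx]; omega)))

theorem mem_of_isIntegral_of_val {z : F} (hz : IsIntegral O z) : z ∈ O :=
  (Subring.isIntegrallyClosed_iff
    (S := ValuationSubring.ofSubring O (mem_or_inv_mem_of_val hmul hO))).mp inferInstance hz

theorem isIntegral_zpow_neg_fdiv_mul_pow {K : Type*} [CommRing K] [Algebra F K] {π : F}
    (hπ0 : π ≠ 0) (hπ : ν π = 1) {n : ℕ} (hn : 0 < n) {a : F} (ha : a ≠ 0) {y : K}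
    (hy : y ^ n = algebraMap F K a) (i : ℕ) :
    IsIntegral O (algebraMap F K (π ^ (-Int.fdiv (i * ν a) n)) * y ^ i) := by
  refine isIntegral_of_pow_eq_algebraMap hn (s := (π ^ (-Int.fdiv (i * ν a) n)) ^ n * a ^ i)
    ((hO _).mpr (.inr ?_)) ?_
  · rw [hmul _ _ (pow_ne_zero _ (zpow_ne_zero _ hπ0)) (pow_ne_zero _ ha),
      val_pow hmul (zpow_ne_zero _ hπ0), val_zpow hmul hπ0, hπ, val_pow hmul ha]
    have := Int.mul_fdiv_self_le (x := i * ν a) (Int.natCast_pos.mpr hn)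
    linarith
  · rw [mul_pow, ← pow_mul, mul_comm i, pow_mul, hy, map_mul, map_pow, map_pow]

theorem mul_zpow_fdiv_mem {π : F} (hπ0 : π ≠ 0) (hπ : ν π = 1) {n : ℕ} (hn : 0 < n)
    {a u c : F} (ha : a ≠ 0) (hu : u ≠ 0) (hνu : ν u = 0) {i : ℕ} (hmem : (u * c) ^ n * a ^ i ∈ O) :
    c * π ^ Int.fdiv (i * ν a) n ∈ O := by
  rcases eq_or_ne c 0 with rfl | hc
  · simp
  have hval := ((hO _).mp hmem).resolve_left (by positivity)
  rw [hmul _ _ (by positivity) (by positivity), val_pow hmul (by positivity),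
    hmul _ _ hu hc, hνu, val_pow hmul ha] at hval
  refine (hO _).mpr (.inr ?_)
  rw [hmul _ _ hc (zpow_ne_zero _ hπ0), val_zpow hmul hπ0, hπ, mul_one]
  have := Int.lt_fdiv_add_one_mul_self (i * ν a) (Int.natCast_pos.mpr hn)
  have : -ν c < Int.fdiv (i * ν a) n + 1 := by
    by_contra! h
    nlinarith
  omega

end Valuation

theorem IsPrimitiveRoot.geom_sum_pow_eq_zero {L : Type*} [CommRing L] [IsDomain L] {ζ : L}
    {n l : ℕ} (hζ : IsPrimitiveRoot ζ n) (hl : ¬ n ∣ l) :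
    ∑ j ∈ Finset.range n, (ζ ^ l) ^ j = 0 := by
  have hne : ζ ^ l - 1 ≠ 0 := sub_ne_zero.mpr fun h => hl ((hζ.pow_eq_one_iff_dvd l).mp h)
  have h := mul_geom_sum (ζ ^ l) n
  rw [← pow_mul, mul_comm l n, pow_mul, hζ.pow_eq_one, one_pow, sub_self] at h
  exact (mul_eq_zero.mp h).resolve_left hne

theorem IsPrimitiveRoot.sum_pow_mul_sum_pow_mul {L : Type*} [CommRing L] [IsDomain L] {ζ : L}
    {n : ℕ} (hζ : IsPrimitiveRoot ζ n) (f : Fin n → L) (i : Fin n) :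
    ∑ j ∈ Finset.range n, ζ ^ ((n - i) * j) * ∑ m : Fin n, ζ ^ ((m : ℕ) * j) * f m = n * f i := by
  have hfilter : ∀ m : Fin n, ∑ j ∈ Finset.range n, ζ ^ ((n - i + m) * j) =
      if m = i then (n : L) else 0 := by
    intro m
    split_ifs with hmi
    · subst hmi
      simp [Nat.sub_add_cancel m.2.le, pow_mul, hζ.pow_eq_one]
    · simp_rw [pow_mul]
      refine hζ.geom_sum_pow_eq_zero fun hdvd => hmi ?_
      -- `0 < n - i + m < 2 * n`, so the only multiple of `n` it can be is `n` itself
      obtain ⟨q, hq⟩ := hdvd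
      have := m.2
      have := i.2
      apply Fin.ext
      rcases q with _ | _ | q
      · omega
      · omega
      · rw [Nat.mul_succ, Nat.mul_succ] at hq; omega
  simp_rw [Finset.mul_sum, ← mul_assoc, ← pow_add, ← add_mul]
  rw [Finset.sum_comm]
  simp_rw [← Finset.sum_mul, hfilter]
  simp

section Kummer

variable {F K : Type*} [Field F] [Field K] [Algebra F K] {n : ℕ} {a : F} {y : K}

theorem minpoly_eq_X_pow_sub_C (hn : n ≠ 0) (hirr : Irreducible (X ^ n - C a))
    (hy : y ^ n = algebraMap F K a) : minpoly F y = X ^ n - C a :=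
  (minpoly.eq_of_irreducible_of_monic hirr (by simp [hy]) (monic_X_pow_sub_C a hn)).symm

theorem exists_basis_eq_pow (hn : n ≠ 0) (hirr : Irreducible (X ^ n - C a))
    (hy : y ^ n = algebraMap F K a) (hgen : Algebra.adjoin F {y} = ⊤) :
    ∃ B : Module.Basis (Fin n) F K, ∀ i, B i = y ^ (i : ℕ) := by
  let pb := PowerBasis.ofAdjoinEqTop
    (.of_pow (Nat.pos_of_ne_zero hn) (hy ▸ isIntegral_algebraMap)) hgen
  have hdim : pb.dim = n := by
    rw [PowerBasis.ofAdjoinEqTop_dim, minpoly_eq_X_pow_sub_C hn hirr hy, natDegree_X_pow_sub_C]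
  exact ⟨pb.basis.reindex (finCongr hdim), fun i => by
    rw [Module.Basis.reindex_apply, PowerBasis.basis_eq_pow]; rfl⟩

theorem exists_algHom_apply_eq (hn : n ≠ 0) (hirr : Irreducible (X ^ n - C a))
    (hy : y ^ n = algebraMap F K a) (hgen : Algebra.adjoin F {y} = ⊤) {L : Type*} [Ring L]
    [Algebra F L] {z : L} (hz : z ^ n = algebraMap F L a) : ∃ σ : K →ₐ[F] L, σ y = z :=
  ⟨(PowerBasis.ofAdjoinEqTop
      (.of_pow (Nat.pos_of_ne_zero hn) (hy ▸ isIntegral_algebraMap)) hgen).lift z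
      (by rw [PowerBasis.ofAdjoinEqTop_gen, minpoly_eq_X_pow_sub_C hn hirr hy]; simp [hz]),
    PowerBasis.lift_gen _ _ _⟩

theorem isIntegral_natCast_mul_coeff_pow_mul_pow {R : Type*} [CommRing R] [Algebra R F]
    [Algebra R K] [IsScalarTower R F K] (hn : (n : F) ≠ 0) (hirr : Irreducible (X ^ n - C a))
    (hy : y ^ n = algebraMap F K a) (hgen : Algebra.adjoin F {y} = ⊤) {c : Fin n → F} {x : K}
    (hx : x = ∑ m : Fin n, algebraMap F K (c m) * y ^ (m : ℕ)) (hint : IsIntegral R x)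
    (i : Fin n) : IsIntegral R ((n * c i) ^ n * a ^ (i : ℕ)) := by
  have hn0 : n ≠ 0 := by rintro rfl; exact hn Nat.cast_zero
  let Ω := AlgebraicClosure K
  have : NeZero (n : Ω) :=
    ⟨by rw [← map_natCast (algebraMap F Ω)]; exact (_root_.map_ne_zero _).mpr hn⟩
  obtain ⟨ζ, hζ⟩ := HasEnoughRootsOfUnity.exists_primitiveRoot Ω n
  set y' := algebraMap K Ω y
  have hy' : y' ^ n = algebraMap F Ω a := by
    rw [← map_pow, hy, ← IsScalarTower.algebraMap_apply]
  have hconj : ∀ j : ℕ, ∃ σ : K →ₐ[F] Ω,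
      σ x = ∑ m : Fin n, ζ ^ ((m : ℕ) * j) * (algebraMap F Ω (c m) * y' ^ (m : ℕ)) := by
    intro j
    obtain ⟨σ, hσ⟩ := exists_algHom_apply_eq hn0 hirr hy hgen (z := ζ ^ j * y') (by
      rw [mul_pow, ← pow_mul, mul_comm j, pow_mul, hζ.pow_eq_one, one_pow, one_mul, hy'])
    refine ⟨σ, ?_⟩
    simp only [hx, map_sum, map_mul, map_pow, hσ, AlgHom.commutes]
    refine Finset.sum_congr rfl fun m _ => ?_
    ring
  choose σ hσ using hconj
  have hζint : IsIntegral R ζ :=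
    .of_pow (Nat.pos_of_ne_zero hn0) (by rw [hζ.pow_eq_one]; exact isIntegral_one)
  have hsum : IsIntegral R (∑ j ∈ Finset.range n, ζ ^ ((n - i) * j) * σ j x) :=
    IsIntegral.sum _ fun j _ => (hζint.pow _).mul (hint.map ((σ j).restrictScalars R))
  simp only [hσ, hζ.sum_pow_mul_sum_pow_mul] at hsum
  have hpow : ((n : Ω) * (algebraMap F Ω (c i) * y' ^ (i : ℕ))) ^ n =
      algebraMap F Ω ((n * c i) ^ n * a ^ (i : ℕ)) := by
    rw [← map_natCast (algebraMap F Ω), mul_pow, mul_pow, ← pow_mul, mul_comm (i : ℕ) n,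
      pow_mul, hy']
    simp only [map_mul, map_pow]
    ring
  exact (isIntegral_algebraMap_iff (algebraMap F Ω).injective).mp (hpow ▸ hsum.pow n)

end Kummer

theorem stmt16_general (k : Type) [Field k] (n : ℕ) (hchar : (n : k) ≠ 0)
    (D : RatFunc k) (hD : D ≠ 0)
    (hirr : Irreducible ((Polynomial.X : Polynomial (RatFunc k)) ^ n - Polynomial.C D))
    (K : Type) [Field K] [Algebra (RatFunc k) K]
    (y : K) (hy : y ^ n = algebraMap (RatFunc k) K D)
    (hgen : Algebra.adjoin (RatFunc k) {y} = ⊤)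
    -- `ν` is a normalized additive valuation on `k(x)`, trivial on constants
    (ν : RatFunc k → ℤ)
    (hmul : ∀ a b : RatFunc k, a ≠ 0 → b ≠ 0 → ν (a * b) = ν a + ν b)
    (hconst : ∀ c : k, c ≠ 0 → ν (RatFunc.C c) = 0)
    (π : RatFunc k) (hπ0 : π ≠ 0) (hπ : ν π = 1)
    -- `O` is the valuation ring `o_𝔭` of `ν`
    (O : Subring (RatFunc k)) (hO : ∀ x : RatFunc k, x ∈ O ↔ x = 0 ∨ 0 ≤ ν x) :
    (∀ x : K,
      (∃ p : Polynomial (RatFunc k), p.Monic ∧ (∀ m : ℕ, p.coeff m ∈ O) ∧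
          Polynomial.aeval x p = 0) ↔
      (∃ c : Fin n → RatFunc k, (∀ i, c i ∈ O) ∧
        x = ∑ i : Fin n, algebraMap (RatFunc k) K
              (c i * π ^ (-Int.fdiv ((i : ℤ) * ν D) (n : ℤ))) * y ^ (i : ℕ))) ∧
    (∀ c : Fin n → RatFunc k,
      ∑ i : Fin n, algebraMap (RatFunc k) K
          (c i * π ^ (-Int.fdiv ((i : ℤ) * ν D) (n : ℤ))) * y ^ (i : ℕ) = 0 →
      ∀ i, c i = 0) := by
  have hn : n ≠ 0 := by rintro rfl; exact hchar Nat.cast_zero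
  obtain ⟨B, hB⟩ := exists_basis_eq_pow hn hirr hy hgen
  have hsum_smul : ∀ c : Fin n → RatFunc k,
      ∑ i : Fin n, algebraMap (RatFunc k) K (c i) * y ^ (i : ℕ) = ∑ i, c i • B i :=
    fun c => by simp only [hB, Algebra.smul_def]
  refine ⟨fun x => Subring.isIntegral_iff_exists_monic.symm.trans ⟨fun hx => ?_, ?_⟩, ?_⟩
  · have hx_repr : x = ∑ i : Fin n, algebraMap (RatFunc k) K (B.repr x i) * y ^ (i : ℕ) := by
      rw [hsum_smul, B.sum_repr]
    have hnν : ν (n : RatFunc k) = 0 := by simpa using hconst _ hchar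
    have hnF : (n : RatFunc k) ≠ 0 := by simpa using (RatFunc.C_injective (K := k)).ne hchar
    refine ⟨fun i => B.repr x i * π ^ Int.fdiv ((i : ℤ) * ν D) n, fun i => ?_, ?_⟩
    · exact mul_zpow_fdiv_mem hmul hO hπ0 hπ (Nat.pos_of_ne_zero hn) hD hnF hnν
        (mem_of_isIntegral_of_val hmul hO
          (isIntegral_natCast_mul_coeff_pow_mul_pow hnF hirr hy hgen hx_repr hx i))
    · conv_lhs => rw [hx_repr]
      simp only [mul_assoc, ← zpow_add₀ hπ0, add_neg_cancel, zpow_zero, mul_one]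
  · rintro ⟨c, hc, rfl⟩
    refine IsIntegral.sum _ fun i _ => ?_
    rw [map_mul, mul_assoc]
    exact (isIntegral_of_pow_eq_algebraMap one_pos (hc i) (pow_one _)).mul
      (isIntegral_zpow_neg_fdiv_mul_pow hmul hO hπ0 hπ (Nat.pos_of_ne_zero hn) hD hy i)
  · intro c hc i
    have h := Fintype.linearIndependent_iff.mp B.linearIndependent
      (fun i => c i * π ^ (-Int.fdiv ((i : ℤ) * ν D) n)) ((hsum_smul _).symm.trans hc) i
    exact (mul_eq_zero.mp h).resolve_right (zpow_ne_zero _ hπ0)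

/-- Local integral bases in a radical function field `K = k(x,y)`, `y^n = D`:
for a place `𝔭` of `k(x)` with (additive, normalized) valuation `ν`, valuation ring `O` and
uniformizer `π`, the family `(π^{-⌊i·ν(D)/n⌋}·y^i)_{i=0,…,n-1}` is an `O`-basis of the
integral closure of `O` in `K` (an element of `K` is integral over `O` iff it is an
`O`-linear combination of these elements, and they are `O`-linearly independent). -/
theorem stmt16 (k : Type) [Field k] (n : ℕ) (hn : 1 < n) (hchar : (n : k) ≠ 0)
    (D : RatFunc k) (hD : D ≠ 0)
    (hirr : Irreducible ((Polynomial.X : Polynomial (RatFunc k)) ^ n - Polynomial.C D))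
    (K : Type) [Field K] [Algebra (RatFunc k) K]
    (y : K) (hy : y ^ n = algebraMap (RatFunc k) K D)
    (hgen : Algebra.adjoin (RatFunc k) {y} = ⊤)
    -- `ν` is a normalized additive valuation on `k(x)`, trivial on constants
    (ν : RatFunc k → ℤ)
    (hmul : ∀ a b : RatFunc k, a ≠ 0 → b ≠ 0 → ν (a * b) = ν a + ν b)
    (hadd : ∀ a b : RatFunc k, a ≠ 0 → b ≠ 0 → a + b ≠ 0 → min (ν a) (ν b) ≤ ν (a + b))
    (hconst : ∀ c : k, c ≠ 0 → ν (RatFunc.C c) = 0)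
    (hsurj : ∀ m : ℤ, ∃ x : RatFunc k, x ≠ 0 ∧ ν x = m)
    (π : RatFunc k) (hπ0 : π ≠ 0) (hπ : ν π = 1)
    -- `O` is the valuation ring `o_𝔭` of `ν`
    (O : Subring (RatFunc k)) (hO : ∀ x : RatFunc k, x ∈ O ↔ x = 0 ∨ 0 ≤ ν x) :
    (∀ x : K,
      (∃ p : Polynomial (RatFunc k), p.Monic ∧ (∀ m : ℕ, p.coeff m ∈ O) ∧
          Polynomial.aeval x p = 0) ↔
      (∃ c : Fin n → RatFunc k, (∀ i, c i ∈ O) ∧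
        x = ∑ i : Fin n, algebraMap (RatFunc k) K
              (c i * π ^ (-Int.fdiv ((i : ℤ) * ν D) (n : ℤ))) * y ^ (i : ℕ))) ∧
    (∀ c : Fin n → RatFunc k,
      ∑ i : Fin n, algebraMap (RatFunc k) K
          (c i * π ^ (-Int.fdiv ((i : ℤ) * ν D) (n : ℤ))) * y ^ (i : ℕ) = 0 →
      ∀ i, c i = 0) :=
  stmt16_general k n hchar D hD hirr K y hy hgen ν hmul hconst π hπ0 hπ O hO
end

section
/- Let K = k(x, y) with y^n = D ∈ k(x)^*, n coprime to char k and Y^n - D irreducible. Write the squarefree decomposition D = sgn(D)·∏_{i∈ℤ} f_i^i with pairwise coprime squarefree monic f_i ∈ k[x], almost all equal to 1, and set D_i = ∏_{j∈ℤ} f_j^{⌊i·j/n⌋} for 0 ≤ i ≤ n-1. Then D_0 = 1 and (1, y/D_1, y²/D_2, …, y^{n-1}/D_{n-1}) is a k[x]-basis of the integral closure O of k[x] in K. -/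
/-!
Write `z ∈ K` as `∑ aᵢ yⁱ` with `aᵢ ∈ k(x)`. Over an algebraic closure `L` of `k(x)`, which contains
a primitive `n`-th root of unity `ζ` because `n ≠ 0` in `k`, the substitutions `y ↦ ζˡ y` are
algebra endomorphisms of `L[Y]/(Yⁿ - D) ⊇ K`, and averaging them against `ζ^{-il}` isolates
`n · aᵢ yⁱ`. Hence `z` is integral over `k[x]` iff every `aᵢ yⁱ` is, i.e. (as `k[x]` is integrally
closed and `(aᵢ yⁱ)ⁿ = aᵢⁿ Dⁱ`) iff every `aᵢⁿ Dⁱ` is a polynomial. Finally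
`Dⁱ = sgnⁱ · D_iⁿ · ∏ f_j^(ij mod n)`, and the last factor divides `(∏ f_j)^(n-1)` with `∏ f_j`
squarefree, so `aᵢⁿ Dⁱ` is a polynomial exactly when `aᵢ D_i` is.
-/

open Polynomial

theorem Squarefree.isUnit_of_pow_dvd_pow {R : Type*} [CommMonoidWithZero R]
    [UniqueFactorizationMonoid R] {P q : R} {m n : ℕ} (hP : Squarefree P) (hmn : m < n)
    (h : q ^ n ∣ P ^ m) : IsUnit q := by
  nontriviality R
  by_contra hq
  have hq0 : q ≠ 0 := by
    rintro rfl
    rw [zero_pow (by omega), zero_dvd_iff] at h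
    exact hP.ne_zero (eq_zero_of_pow_eq_zero h)
  obtain ⟨ℓ, hℓ, hℓq⟩ := WfDvdMonoid.exists_irreducible_factor hq hq0
  have hℓP : (n : ℕ∞) ≤ m * emultiplicity ℓ P := by
    rw [← emultiplicity_pow hℓ.prime, ← pow_dvd_iff_le_emultiplicity]
    exact (pow_dvd_pow_of_dvd hℓq n).trans h
  have hle : emultiplicity ℓ P ≤ 1 :=
    ((squarefree_iff_emultiplicity_le_one P).1 hP ℓ).resolve_right hℓ.not_isUnit
  have : (n : ℕ∞) ≤ m := hℓP.trans (mul_le_of_le_one_right' hle)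
  exact absurd (by exact_mod_cast this) hmn.not_ge

namespace IsFractionRing

variable {A K : Type*} [CommRing A] [IsDomain A] [UniqueFactorizationMonoid A] [Field K]
  [Algebra A K] [IsFractionRing A K]

theorem isInteger_of_isInteger_pow_mul {b : K} {E P : A} {m n : ℕ} (hP : Squarefree P)
    (hmn : m < n) (hE : E ∣ P ^ m) (h : IsLocalization.IsInteger A (b ^ n * algebraMap A K E)) :
    IsLocalization.IsInteger A b := by
  obtain ⟨p, hp⟩ := h
  have hv : algebraMap A K (den A b) ≠ 0 :=
    IsFractionRing.to_map_ne_zero_of_mem_nonZeroDivisors (den A b).2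
  have key : num A b ^ n * E = den A b ^ n * p := by
    apply IsFractionRing.injective A K
    rw [← mk'_num_den' A b] at hp
    simp only [map_mul, map_pow, hp, div_pow]
    field_simp
  have hdvd : (den A b : A) ^ n ∣ E :=
    (num_den_reduced A b).symm.pow.dvd_of_dvd_mul_left ⟨p, key⟩
  exact isInteger_of_isUnit_den (hP.isUnit_of_pow_dvd_pow hmn (hdvd.trans hE))

end IsFractionRing

theorem IsPrimitiveRoot.sum_range_pow_mul {R : Type*} [CommRing R] [IsDomain R] {n : ℕ} {ζ : R}
    (hζ : IsPrimitiveRoot ζ n) (j : ℕ) :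
    ∑ l ∈ Finset.range n, ζ ^ (j * l) = if n ∣ j then (n : R) else 0 := by
  simp_rw [pow_mul]
  split_ifs with hj
  · simp [(hζ.pow_eq_one_iff_dvd j).2 hj]
  · refine eq_zero_of_ne_zero_of_mul_left_eq_zero
      (sub_ne_zero_of_ne fun h => hj ((hζ.pow_eq_one_iff_dvd j).1 h.symm)) ?_
    rw [mul_neg_geom_sum, ← pow_mul, mul_comm, pow_mul, hζ.pow_eq_one, one_pow, sub_self]

theorem Nat.dvd_add_sub_iff_eq {n m i : ℕ} (hm : m < n) (hi : i < n) : n ∣ m + n - i ↔ m = i := by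
  constructor
  · rintro ⟨k, hk⟩
    rcases k with _ | _ | k
    · omega
    · omega
    · have : n * 2 ≤ n * (k + 1 + 1) := Nat.mul_le_mul_left n (by omega)
      omega
  · rintro rfl
    simp

namespace AdjoinRoot

variable {L : Type*} [Field L] {n : ℕ} {ζ : L}

theorem autAdjoinRootXPowSubCHom_pow_algebraMap_mul_root_pow [NeZero n]
    (hζ : IsPrimitiveRoot ζ n) (d : L) (l : ℕ) (c : L) (m : ℕ) :
    autAdjoinRootXPowSubCHom n d (hζ.toRootsOfUnity ^ l) (algebraMap L _ c * root _ ^ m) =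
      algebraMap L _ (c * ζ ^ (l * m)) * root (X ^ n - C d) ^ m := by
  simp [autAdjoinRootXPowSubCHom, liftAlgHom_root, mul_pow, Algebra.smul_def]
  ring

theorem sum_pow_mul_autAdjoinRootXPowSubCHom [NeZero n]
    (hζ : IsPrimitiveRoot ζ n) (d : L) (c : Fin n → L) (i : Fin n) :
    ∑ l ∈ Finset.range n, algebraMap L _ (ζ ^ ((n - i) * l)) *
      autAdjoinRootXPowSubCHom n d (hζ.toRootsOfUnity ^ l)
        (∑ m : Fin n, algebraMap L _ (c m) * root (X ^ n - C d) ^ (m : ℕ)) =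
      algebraMap L _ (c i) * root (X ^ n - C d) ^ (i : ℕ) * (n : AdjoinRoot (X ^ n - C d)) := by
  simp_rw [map_sum, autAdjoinRootXPowSubCHom_pow_algebraMap_mul_root_pow, Finset.mul_sum]
  rw [Finset.sum_comm]
  have horth : ∀ m : Fin n, ∑ l ∈ Finset.range n, algebraMap L (AdjoinRoot (X ^ n - C d))
      (ζ ^ ((n - i) * l)) * (algebraMap L _ (c m * ζ ^ (l * m)) * root _ ^ (m : ℕ)) =
      algebraMap L _ (c m * if (m : ℕ) = i then (n : L) else 0) * root (X ^ n - C d) ^ (m : ℕ) := by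
    intro m
    simp only [← Nat.dvd_add_sub_iff_eq m.2 i.2, ← hζ.sum_range_pow_mul, Finset.mul_sum, map_sum,
      Finset.sum_mul]
    refine Finset.sum_congr rfl fun l _ => ?_
    rw [← mul_assoc, ← map_mul]
    congr 2
    rw [mul_left_comm, ← pow_add, Nat.add_sub_assoc i.2.le]
    ring
  rw [Finset.sum_congr rfl fun m _ => horth m, Fintype.sum_eq_single i]
  · simp [mul_right_comm]
  · intro m hm
    simp [Fin.val_ne_of_ne hm]

theorem isIntegral_algebraMap_mul_root_pow_of_isIntegral_sum {S : Type*} [CommRing S]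
    [Algebra S L] (hζ : IsPrimitiveRoot ζ n) (hn : IsUnit (n : S)) (d : L) (c : Fin n → L)
    (hz : IsIntegral S (∑ m : Fin n, algebraMap L _ (c m) * root (X ^ n - C d) ^ (m : ℕ)))
    (i : Fin n) : IsIntegral S (algebraMap L _ (c i) * root (X ^ n - C d) ^ (i : ℕ)) := by
  have : NeZero n := NeZero.of_pos i.pos
  obtain ⟨u, hu⟩ := hn.exists_left_inv
  refine IsIntegral.of_mul_unit (r := u) (y := (n : AdjoinRoot (X ^ n - C d))) ?_ ?_
  · rw [← map_natCast (algebraMap S _), ← map_mul, hu, map_one]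
  rw [← sum_pow_mul_autAdjoinRootXPowSubCHom hζ d c i]
  refine IsIntegral.sum _ fun l _ => .mul (.of_pow (Nat.pos_of_neZero n) ?_)
    (hz.map ((autAdjoinRootXPowSubCHom n d _).restrictScalars S))
  rw [← map_pow, ← pow_mul, mul_comm, pow_mul, hζ.pow_eq_one, one_pow, map_one]
  exact isIntegral_one

end AdjoinRoot

section RadicalExtension

variable {F K : Type*} [Field F] [Field K] [Algebra F K] {n : ℕ} {D : F} {y : K}

theorem minpoly_eq_X_pow_sub_C_of_irreducible (hirr : Irreducible (X ^ n - C D))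
    (hy : y ^ n = algebraMap F K D) : minpoly F y = X ^ n - C D :=
  (minpoly.eq_of_irreducible_of_monic hirr (by simp [hy])
    (monic_X_pow_sub_C D (ne_zero_of_irreducible_X_pow_sub_C hirr))).symm

theorem isIntegral_of_pow_eq_algebraMap_s17 (hn : 0 < n) (hy : y ^ n = algebraMap F K D) :
    IsIntegral F y :=
  .of_pow hn (hy ▸ isIntegral_algebraMap)

theorem exists_basis_pow_of_irreducible (hirr : Irreducible (X ^ n - C D))
    (hy : y ^ n = algebraMap F K D) (hgen : Algebra.adjoin F {y} = ⊤) :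
    ∃ b : Module.Basis (Fin n) F K, ∀ i, b i = y ^ (i : ℕ) := by
  have hn := Nat.pos_of_ne_zero (ne_zero_of_irreducible_X_pow_sub_C hirr)
  let pb := PowerBasis.ofAdjoinEqTop (isIntegral_of_pow_eq_algebraMap_s17 hn hy) hgen
  have hdim : pb.dim = n := by
    simp [pb, minpoly_eq_X_pow_sub_C_of_irreducible hirr hy]
  refine ⟨pb.basis.reindex (finCongr hdim), fun i => ?_⟩
  rw [Module.Basis.reindex_apply, pb.coe_basis]
  rfl

variable {R : Type*} [CommRing R] [Algebra R F] [Algebra R K] [IsScalarTower R F K]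

theorem isIntegral_algebraMap_mul_pow_of_isIntegral_sum (hn : IsUnit (n : R))
    (hirr : Irreducible (X ^ n - C D)) (hy : y ^ n = algebraMap F K D)
    (hgen : Algebra.adjoin F {y} = ⊤) (a : Fin n → F)
    (hz : IsIntegral R (∑ m : Fin n, algebraMap F K (a m) * y ^ (m : ℕ))) (i : Fin n) :
    IsIntegral R (algebraMap F K (a i) * y ^ (i : ℕ)) := by
  have hn0 := ne_zero_of_irreducible_X_pow_sub_C hirr
  let L := AlgebraicClosure F
  have : NeZero (n : L) := ⟨by
    simpa using (hn.map (algebraMap R L)).ne_zero⟩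
  obtain ⟨ζ, hζ⟩ := HasEnoughRootsOfUnity.exists_primitiveRoot L n
  have : Nontrivial (AdjoinRoot (X ^ n - C (algebraMap F L D))) := AdjoinRoot.nontrivial _ (by
    rw [degree_X_pow_sub_C (Nat.pos_of_ne_zero hn0)]; exact_mod_cast hn0)
  let pb := PowerBasis.ofAdjoinEqTop
    (isIntegral_of_pow_eq_algebraMap_s17 (Nat.pos_of_ne_zero hn0) hy) hgen
  let ψ : K →ₐ[F] AdjoinRoot (X ^ n - C (algebraMap F L D)) := pb.lift (AdjoinRoot.root _) (by
    simp [pb, minpoly_eq_X_pow_sub_C_of_irreducible hirr hy,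
      IsScalarTower.algebraMap_apply F L (AdjoinRoot _), root_X_pow_sub_C_pow,
      AdjoinRoot.algebraMap_eq])
  have hψ : Function.Injective (ψ.restrictScalars R) := ψ.toRingHom.injective
  rw [← isIntegral_algHom_iff _ hψ] at hz ⊢
  have hψy : ψ y = AdjoinRoot.root _ := pb.lift_gen _ _
  simp only [AlgHom.restrictScalars_apply, map_sum, map_mul, map_pow, hψy, AlgHom.commutes,
    IsScalarTower.algebraMap_apply F L (AdjoinRoot _)] at hz ⊢
  exact AdjoinRoot.isIntegral_algebraMap_mul_root_pow_of_isIntegral_sum hζ hn _ _ hz i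

theorem isIntegral_algebraMap_mul_pow_iff [IsDomain R] [IsIntegrallyClosed R] [IsFractionRing R F]
    (hn : 0 < n) (hy : y ^ n = algebraMap F K D) (a : F) (i : ℕ) :
    IsIntegral R (algebraMap F K a * y ^ i) ↔ IsLocalization.IsInteger R (a ^ n * D ^ i) := by
  have hpow : (algebraMap F K a * y ^ i) ^ n = algebraMap F K (a ^ n * D ^ i) := by
    rw [mul_pow, ← pow_mul, mul_comm i, pow_mul, hy, map_mul, map_pow, map_pow]
  rw [← IsIntegral.pow_iff hn, hpow, isIntegral_algebraMap_iff (algebraMap F K).injective,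
    IsIntegrallyClosed.isIntegral_iff]
  rfl

end RadicalExtension

section SquarefreeDecomposition

theorem prod_zpow_pow_eq_prod_zpow_fdiv_pow_mul {A K ι : Type*} [CommRing A] [Field K]
    [Algebra A K] {s : Finset ι} {x : ι → A} (hx : ∀ j, algebraMap A K (x j) ≠ 0) (e : ι → ℤ)
    {n : ℕ} (hn : 0 < n) (i : ℕ) :
    (∏ j ∈ s, algebraMap A K (x j) ^ e j) ^ i =
      (∏ j ∈ s, algebraMap A K (x j) ^ Int.fdiv (i * e j) n) ^ n *
        algebraMap A K (∏ j ∈ s, x j ^ (Int.fmod (i * e j) n).toNat) := by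
  rw [map_prod, ← Finset.prod_pow, ← Finset.prod_pow, ← Finset.prod_mul_distrib]
  refine Finset.prod_congr rfl fun j _ => ?_
  rw [map_pow, ← zpow_natCast, ← zpow_natCast, ← zpow_natCast, ← zpow_mul, ← zpow_mul,
    Int.toNat_of_nonneg (Int.fmod_nonneg_of_pos _ (by omega)), ← zpow_add₀ (hx j),
    mul_comm _ (n : ℤ), Int.mul_fdiv_add_fmod, mul_comm]

theorem prod_pow_toNat_fmod_dvd {M ι : Type*} [CommMonoid M] (s : Finset ι) (x : ι → M)
    (e : ι → ℤ) {n : ℕ} (hn : 0 < n) :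
    ∏ j ∈ s, x j ^ (Int.fmod (e j) n).toNat ∣ (∏ j ∈ s, x j) ^ (n - 1) := by
  rw [← Finset.prod_pow]
  refine Finset.prod_dvd_prod_of_dvd _ _ fun j _ => pow_dvd_pow _ ?_
  have := Int.fmod_lt_of_pos (e j) (show (0 : ℤ) < n by omega)
  omega

variable {k : Type*} [Field k] {n : ℕ} {f : ℤ → k[X]} {S : Finset ℤ} {sgn : k}

theorem isInteger_pow_mul_pow_iff_isInteger_mul_prod_zpow_fdiv (hn : 0 < n)
    (hsqfree : ∀ j, Squarefree (f j)) (hcop : ∀ j₁ j₂, j₁ ≠ j₂ → IsCoprime (f j₁) (f j₂))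
    (hsgn : sgn ≠ 0) (a : RatFunc k) (i : ℕ) :
    IsLocalization.IsInteger k[X]
        (a ^ n * (RatFunc.C sgn * ∏ j ∈ S, algebraMap k[X] (RatFunc k) (f j) ^ j) ^ i) ↔
      IsLocalization.IsInteger k[X]
        (a * ∏ j ∈ S, algebraMap k[X] (RatFunc k) (f j) ^ Int.fdiv (i * j) n) := by
  set E := C (sgn ^ i) * ∏ j ∈ S, f j ^ (Int.fmod (i * j) n).toNat
  have hfac : a ^ n * (RatFunc.C sgn * ∏ j ∈ S, algebraMap k[X] (RatFunc k) (f j) ^ j) ^ i =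
      (a * ∏ j ∈ S, algebraMap k[X] (RatFunc k) (f j) ^ Int.fdiv (i * j) n) ^ n *
        algebraMap k[X] (RatFunc k) E := by
    rw [mul_pow, prod_zpow_pow_eq_prod_zpow_fdiv_pow_mul
      (fun j => RatFunc.algebraMap_ne_zero (hsqfree j).ne_zero) (fun j => j) hn]
    simp only [E, map_mul, RatFunc.algebraMap_C, map_pow]
    ring
  have hP : Squarefree (∏ j ∈ S, f j) := Finset.squarefree_prod_of_pairwise_isCoprime
    (fun j₁ _ j₂ _ h => (hcop j₁ j₂ h).isRelPrime) fun j _ => hsqfree j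
  have hE : E ∣ (∏ j ∈ S, f j) ^ (n - 1) :=
    (isUnit_C.2 (hsgn.isUnit.pow i)).mul_left_dvd.2 (prod_pow_toNat_fmod_dvd S f _ hn)
  rw [hfac]
  refine ⟨IsFractionRing.isInteger_of_isInteger_pow_mul hP (by omega) hE, ?_⟩
  rintro ⟨c, hc⟩
  exact ⟨c ^ n * E, by rw [map_mul, map_pow, hc]⟩

end SquarefreeDecomposition

theorem stmt17_general (k : Type) [Field k] (n : ℕ) (hchar : (n : k) ≠ 0)
    (f : ℤ → Polynomial k) (S : Finset ℤ)
    (hsqfree : ∀ j, Squarefree (f j))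
    (hcop : ∀ j₁ j₂, j₁ ≠ j₂ → IsCoprime (f j₁) (f j₂))
    (sgn : k) (hsgn : sgn ≠ 0)
    (D : RatFunc k)
    (hDdecomp : D = RatFunc.C sgn *
      ∏ j ∈ S, (algebraMap (Polynomial k) (RatFunc k) (f j)) ^ j)
    (hirr : Irreducible ((Polynomial.X : Polynomial (RatFunc k)) ^ n - Polynomial.C D))
    (K : Type) [Field K] [Algebra (RatFunc k) K] [Algebra (Polynomial k) K]
    [IsScalarTower (Polynomial k) (RatFunc k) K]
    (y : K) (hy : y ^ n = algebraMap (RatFunc k) K D)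
    (hgen : Algebra.adjoin (RatFunc k) {y} = ⊤)
    (Di : ℕ → RatFunc k)
    (hDi : ∀ i : ℕ, Di i = ∏ j ∈ S,
      (algebraMap (Polynomial k) (RatFunc k) (f j)) ^ Int.fdiv ((i : ℤ) * j) (n : ℤ)) :
    Di 0 = 1 ∧
    (∀ x : K, x ∈ integralClosure (Polynomial k) K ↔
      ∃ c : Fin n → Polynomial k,
        x = ∑ i : Fin n, algebraMap (RatFunc k) K
              (algebraMap (Polynomial k) (RatFunc k) (c i) / Di (i : ℕ)) * y ^ (i : ℕ)) ∧
    (∀ c : Fin n → Polynomial k,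
      ∑ i : Fin n, algebraMap (RatFunc k) K
          (algebraMap (Polynomial k) (RatFunc k) (c i) / Di (i : ℕ)) * y ^ (i : ℕ) = 0 →
      ∀ i, c i = 0) := by
  have hn0 : 0 < n := Nat.pos_of_ne_zero (ne_zero_of_irreducible_X_pow_sub_C hirr)
  have hDi0 : ∀ i, Di i ≠ 0 := fun i => by
    rw [hDi]
    exact Finset.prod_ne_zero_iff.2 fun j _ =>
      zpow_ne_zero _ (RatFunc.algebraMap_ne_zero (hsqfree j).ne_zero)
  have hcomp : ∀ (a : RatFunc k) (i : ℕ), IsIntegral k[X] (algebraMap _ K a * y ^ i) ↔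
      ∃ c, a = algebraMap k[X] _ c / Di i := by
    intro a i
    rw [isIntegral_algebraMap_mul_pow_iff hn0 hy, hDdecomp,
      isInteger_pow_mul_pow_iff_isInteger_mul_prod_zpow_fdiv hn0 hsqfree hcop hsgn, ← hDi]
    simp only [IsLocalization.IsInteger, RingHom.mem_rangeS, eq_div_iff (hDi0 i), eq_comm]
  obtain ⟨b, hb⟩ := exists_basis_pow_of_irreducible hirr hy hgen
  refine ⟨by simp [hDi], fun z => ⟨fun hz => ?_, ?_⟩, fun c hc i => ?_⟩
  · have hz' : z = ∑ m, algebraMap _ K (b.repr z m) * y ^ (m : ℕ) := by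
      conv_lhs => rw [← b.sum_repr z]
      simp [hb, Algebra.smul_def]
    have hnR : IsUnit (n : k[X]) := by
      rw [← map_natCast C]
      exact isUnit_C.2 hchar.isUnit
    rw [hz'] at hz
    choose c hc using fun i => (hcomp _ _).1
      (isIntegral_algebraMap_mul_pow_of_isIntegral_sum hnR hirr hy hgen _ hz i)
    exact ⟨c, hz'.trans (by simp only [hc])⟩
  · rintro ⟨c, rfl⟩
    exact IsIntegral.sum _ fun i _ => (hcomp _ _).2 ⟨c i, rfl⟩
  · have := Fintype.linearIndependent_iff.1 b.linearIndependent
      (fun i => algebraMap _ _ (c i) / Di i) (by simpa [hb, Algebra.smul_def] using hc) i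
    simpa [hDi0] using this

/-- Wu's global integral basis, generalized: if `D = sgn(D)·∏_{j∈ℤ} f_j^j` is the squarefree
decomposition of `D ∈ k(x)^*` and `D_i = ∏_j f_j^{⌊i·j/n⌋}`, then `D_0 = 1` and
`(1, y/D_1, …, y^{n-1}/D_{n-1})` is a `k[x]`-basis of the integral closure `O` of `k[x]` in
the radical function field `K = k(x,y)`, `y^n = D`. -/
theorem stmt17 (k : Type) [Field k] (n : ℕ) (hn : 1 < n) (hchar : (n : k) ≠ 0)
    (f : ℤ → Polynomial k) (S : Finset ℤ) (hfS : ∀ j ∉ S, f j = 1)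
    (hmonic : ∀ j, (f j).Monic) (hsqfree : ∀ j, Squarefree (f j))
    (hcop : ∀ j₁ j₂, j₁ ≠ j₂ → IsCoprime (f j₁) (f j₂))
    (sgn : k) (hsgn : sgn ≠ 0)
    (D : RatFunc k)
    (hDdecomp : D = RatFunc.C sgn *
      ∏ j ∈ S, (algebraMap (Polynomial k) (RatFunc k) (f j)) ^ j)
    (hirr : Irreducible ((Polynomial.X : Polynomial (RatFunc k)) ^ n - Polynomial.C D))
    (K : Type) [Field K] [Algebra (RatFunc k) K] [Algebra (Polynomial k) K]
    [IsScalarTower (Polynomial k) (RatFunc k) K]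
    (y : K) (hy : y ^ n = algebraMap (RatFunc k) K D)
    (hgen : Algebra.adjoin (RatFunc k) {y} = ⊤)
    (Di : ℕ → RatFunc k)
    (hDi : ∀ i : ℕ, Di i = ∏ j ∈ S,
      (algebraMap (Polynomial k) (RatFunc k) (f j)) ^ Int.fdiv ((i : ℤ) * j) (n : ℤ)) :
    Di 0 = 1 ∧
    (∀ x : K, x ∈ integralClosure (Polynomial k) K ↔
      ∃ c : Fin n → Polynomial k,
        x = ∑ i : Fin n, algebraMap (RatFunc k) K
              (algebraMap (Polynomial k) (RatFunc k) (c i) / Di (i : ℕ)) * y ^ (i : ℕ)) ∧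
    (∀ c : Fin n → Polynomial k,
      ∑ i : Fin n, algebraMap (RatFunc k) K
          (algebraMap (Polynomial k) (RatFunc k) (c i) / Di (i : ℕ)) * y ^ (i : ℕ) = 0 →
      ∀ i, c i = 0) :=
  stmt17_general k n hchar f S hsqfree hcop sgn hsgn D hDdecomp hirr K y hy hgen Di hDi
end
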